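/- The eval-readback evaluator byName is big-step equivalent to the balanced hybrid evaluator hybrid normal order: for all terms M and N, hn(M) = N if and only if there exists a term P with he(M) = P and args(P) = N; i.e., as big-step relations, args ∘ he = hn. -/
import Mathlib


/-- Pure λ-calculus terms (de Bruijn representation). -/
inductive Tm : Type
  | var : Nat → Tm
  | lam : Tm → Tm
  | app : Tm → Tm → Tm
deriving DecidableEq

/-- Shift the free variables (those ≥ `c`) of a term up by one. -/
def lift (c : Nat) : Tm → Tm
  | .var n => if n < c then .var n else .var (n + 1)
  | .lam b => .lam (lift (c + 1) b)
  | .app m n => .app (lift c m) (lift c n)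

/-- Capture-avoiding substitution `[N/k]B` (de Bruijn). -/
def subst (N : Tm) (k : Nat) : Tm → Tm
  | .var n => if n < k then .var n else if n = k then N else .var (n - 1)
  | .lam b => .lam (subst (lift 0 N) (k + 1) b)
  | .app m n => .app (subst N k m) (subst N k n)
/-- Composition of big-step relations: `(Comp s2 s1) M N` iff
    there is `P` with `s1 M P` and `s2 P N`. -/
def Comp (s2 s1 : Tm → Tm → Prop) : Tm → Tm → Prop :=
  fun M N => ∃ P, s1 M P ∧ s2 P N

/-- The term `Ω = (λx.x x)(λx.x x)`. -/
def Omega : Tm :=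
  .app (.lam (.app (.var 0) (.var 0))) (.lam (.app (.var 0) (.var 0)))
/-- Head spine big-step relation. -/
inductive He : Tm → Tm → Prop
  | var : ∀ n, He (.var n) (.var n)
  | lam : ∀ B B', He B B' → He (.lam B) (.lam B')
  | beta : ∀ M N B B', He M (.lam B) → He (subst N 0 B) B' → He (.app M N) B'
  | neu : ∀ M N M', He M M' → (∀ B, M' ≠ .lam B) → He (.app M N) (.app M' N)

/-- Hybrid normal order big-step relation (with head spine as subsidiary). -/
inductive Hn : Tm → Tm → Prop
  | var : ∀ n, Hn (.var n) (.var n)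
  | lam : ∀ B B', Hn B B' → Hn (.lam B) (.lam B')
  | beta : ∀ M N B B', He M (.lam B) → Hn (subst N 0 B) B' → Hn (.app M N) B'
  | neu : ∀ M N M' M'' N', He M M' → (∀ B, M' ≠ .lam B) → Hn M' M'' → Hn N N' →
      Hn (.app M N) (.app M'' N')

/-- The readback `args` of the eval-readback evaluator byName. -/
inductive Args : Tm → Tm → Prop
  | var : ∀ n, Args (.var n) (.var n)
  | lam : ∀ B B', Args B B' → Args (.lam B) (.lam B')
  | app : ∀ M N M' P N'', Args M M' → He N P → Args P N'' →
      Args (.app M N) (.app M' N'')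

/-- He is idempotent on its results. -/
theorem he_idem : ∀ {M M' : Tm}, He M M' → He M' M' := by
  intro M M' h
  induction h with
  | var n => exact He.var n
  | lam B B' _ ih => exact He.lam _ _ ih
  | beta M N B B' _ _ _ ih2 => exact ih2
  | neu M N M' _ hnl ih => exact He.neu _ _ _ ih hnl

/-- He is deterministic. -/
theorem he_det : ∀ {M M1 : Tm}, He M M1 → ∀ {M2}, He M M2 → M1 = M2 := by
  intro M M1 h
  induction h with
  | var n => intro M2 h2; cases h2; rfl
  | lam B B' _ ih =>
    intro M2 h2; cases h2 with
    | lam B B2 hb => rw [ih hb]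
  | beta M N B B' hM _ ih1 ih2 =>
    intro M2 h2
    cases h2 with
    | beta M N B2 B2' hM2 hs2 =>
      have := ih1 hM2
      injection this with hB
      subst hB
      exact ih2 hs2
    | neu M N M2' hM2 hnl => exact absurd (ih1 hM2) (fun e => hnl _ e.symm)
  | neu M N M' hM hnl ih =>
    intro M2 h2
    cases h2 with
    | beta M N B2 B2' hM2 hs2 => exact absurd (ih hM2) (hnl _)
    | neu M N M2' hM2 hnl2 => rw [ih hM2]

/-- He followed by Hn gives Hn. -/
theorem hn_of_he_hn : ∀ {M P : Tm}, He M P → ∀ {N}, Hn P N → Hn M N := by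
  intro M P h
  induction h with
  | var n => intro N hn; exact hn
  | lam B B' _ ih =>
    intro N hn
    cases hn with
    | lam B B'' hb => exact Hn.lam _ _ (ih hb)
  | beta M N0 B B' hM _ _ ih2 =>
    intro N hn
    exact Hn.beta _ _ _ _ hM (ih2 hn)
  | neu M N0 M' hM hnl ih =>
    intro N hn
    cases hn with
    | beta _ _ B _ hM2 hs =>
      exact absurd (he_det (he_idem hM) hM2) (hnl B)
    | neu _ _ Q M'' N' hQ hnl2 hM'' hN' =>
      have hQe : Q = M' := (he_det (he_idem hM) hQ).symm
      subst hQe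
      exact Hn.neu _ _ _ _ _ hM hnl hM'' hN'

/-- Shape of He results that are applications. -/
theorem he_app_inv : ∀ {M A B : Tm}, He M (.app A B) → He A A ∧ (∀ C, A ≠ .lam C) := by
  intro M A B h
  generalize hAB : Tm.app A B = AB at h
  induction h with
  | var n => exact absurd hAB (by simp)
  | lam B B' _ _ => exact absurd hAB (by simp)
  | beta M N Bb B' _ _ _ ih2 => exact ih2 hAB
  | neu M N M' hM hnl ih =>
    injection hAB with h1 h2
    subst h1; subst h2
    exact ⟨he_idem hM, hnl⟩

theorem hn_of_args : ∀ {P N : Tm}, Args P N → He P P → Hn P N := by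
  intro P N h
  induction h with
  | var n => intro _; exact Hn.var n
  | lam B B' _ ih =>
    intro hP
    cases hP with
    | lam _ _ hb => exact Hn.lam _ _ (ih hb)
  | app M N M' Q N'' _ hN _ ihM ihQ =>
    intro hP
    obtain ⟨hMM, hnl⟩ := he_app_inv hP
    exact Hn.neu _ _ _ _ _ hMM hnl (ihM hMM) (hn_of_he_hn hN (ihQ (he_idem hN)))

/-- byName (= args ∘ he) is big-step equivalent to hybrid normal order. -/
theorem byName_equiv_hn :
    (∀ M N : Tm, Hn M N ↔ ∃ P : Tm, He M P ∧ Args P N) ∧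
    Comp Args He = Hn := by
  have main : ∀ M N : Tm, Hn M N ↔ ∃ P : Tm, He M P ∧ Args P N := by
    intro M N
    constructor
    · intro h
      induction h with
      | var n => exact ⟨_, He.var n, Args.var n⟩
      | lam B B' _ ih =>
        obtain ⟨P, hP, hA⟩ := ih
        exact ⟨_, He.lam _ _ hP, Args.lam _ _ hA⟩
      | beta M N B B' hM _ ih =>
        obtain ⟨P, hP, hA⟩ := ih
        exact ⟨_, He.beta _ _ _ _ hM hP, hA⟩
      | neu M N M' M'' N' hM hnl _ _ ihM ihN =>
        obtain ⟨Q, hQ, hAQ⟩ := ihM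
        obtain ⟨R, hR, hAR⟩ := ihN
        have : Q = M' := (he_det (he_idem hM) hQ).symm
        subst this
        exact ⟨_, He.neu _ _ _ hM hnl, Args.app _ _ _ _ _ hAQ hR hAR⟩
    · rintro ⟨P, hP, hA⟩
      exact hn_of_he_hn hP (hn_of_args hA (he_idem hP))
  refine ⟨main, ?_⟩
  funext M N
  exact propext (main M N).symm
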